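/- Let L be an N×N Laplacian matrix, let P_e be an N×N row stochastic matrix with strictly positive diagonal entries, and suppose that the directed graph on vertices {1, …, N} with an edge from j to i whenever i ≠ j and (P_e)_{ij} > 0 or L_{ij} < 0 contains a directed spanning tree. Then for every t > 0 the matrix P_e · exp(-tL) is SIA. -/

import Mathlib

/-!
Write `E = exp (-t L)` and `M = Pe * E`. Shifting `-t L` by a large multiple `s • 1` makes it
entrywise nonnegative, so `E = e^(-s) exp (-t L + s • 1)` dominates a positive multiple of
`1 - t L` entrywise; with `E *ᵥ 1 = 1` this makes `M` row stochastic with positive diagonal and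
`M i j > 0` along every edge of the graph. The positive diagonal lets paths from the root be
padded to any length, so some power `M ^ K` has a positive column `r`, say with entries `≥ ε`.
For every vector `v`, the maximum of `M ^ k *ᵥ v` decreases, its minimum increases, and their gap
shrinks by the factor `1 - ε` every `K` steps: `M ^ k *ᵥ v` tends to a constant vector, and
applying this to the basis vectors gives the limit `1_N cᵀ`.
-/

open Matrix Filter Topology NormedSpace
open scoped Nat

lemma tendsto_zero_of_antitone_of_le_mul {d : ℕ → ℝ} (hd : Antitone d) (h0 : ∀ k, 0 ≤ d k)
    {q : ℝ} (hq0 : 0 ≤ q) (hq1 : q < 1) {K : ℕ} (hK : K ≠ 0)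
    (h : ∀ k, d (k + K) ≤ q * d k) :
    Tendsto d atTop (𝓝 0) := by
  have hgeom : ∀ m, d (m * K) ≤ q ^ m * d 0 := by
    intro m
    induction m with
    | zero => simp
    | succ m ih =>
      calc d ((m + 1) * K) = d (m * K + K) := by rw [add_one_mul]
        _ ≤ q * d (m * K) := h _
        _ ≤ q * (q ^ m * d 0) := mul_le_mul_of_nonneg_left ih hq0
        _ = q ^ (m + 1) * d 0 := by ring
  have hbound : ∀ k, d k ≤ q ^ (k / K) * d 0 := fun k =>
    (hd (Nat.div_mul_le_self k K)).trans (hgeom _)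
  have hlim : Tendsto (fun k => q ^ (k / K) * d 0) atTop (𝓝 0) := by
    simpa using ((tendsto_pow_atTop_nhds_zero_of_lt_one hq0 hq1).comp
      (Nat.tendsto_div_const_atTop hK)).mul_const (d 0)
  exact tendsto_of_tendsto_of_tendsto_of_le_of_le tendsto_const_nhds hlim h0 hbound

lemma exists_tendsto_const_of_squeeze {ι : Type*} {x : ℕ → ι → ℝ} {a b : ℕ → ℝ}
    (ha : Antitone a) (hb : Monotone b) (hab : Tendsto (a - b) atTop (𝓝 0))
    (hxa : ∀ k i, x k i ≤ a k) (hbx : ∀ k i, b k ≤ x k i) :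
    ∃ c, Tendsto x atTop (𝓝 fun _ => c) := by
  have hba : ∀ k, b k ≤ a k := fun k => sub_nonneg.1
    (Antitone.le_of_tendsto (fun _ _ hkl => sub_le_sub (ha hkl) (hb hkl)) hab k)
  have ha_lim : Tendsto a atTop (𝓝 (⨅ k, a k)) :=
    tendsto_atTop_ciInf ha ⟨b 0, by rintro _ ⟨k, rfl⟩; exact (hb k.zero_le).trans (hba k)⟩
  have hb_lim : Tendsto b atTop (𝓝 (⨅ k, a k)) := by
    simpa using ha_lim.sub hab
  exact ⟨⨅ k, a k, tendsto_pi_nhds.2 fun i =>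
    tendsto_of_tendsto_of_tendsto_of_le_of_le hb_lim ha_lim (hbx · i) (hxa · i)⟩

namespace Matrix

variable {n : Type*} [Fintype n]

lemma mul_apply_pos {R : Type*} [Semiring R] [PartialOrder R] [IsStrictOrderedRing R]
    {m o : Type*} {A : Matrix m n R} {B : Matrix n o R}
    (hA : ∀ i j, 0 ≤ A i j) (hB : ∀ i j, 0 ≤ B i j) {i : m} {k : n} {j : o}
    (hik : 0 < A i k) (hkj : 0 < B k j) : 0 < (A * B) i j :=
  (mul_pos hik hkj).trans_le
    (Finset.single_le_sum (fun l _ => mul_nonneg (hA i l) (hB l j)) (Finset.mem_univ k))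

variable [DecidableEq n]

section Exponential

lemma hasSum_exp (B : Matrix n n ℝ) :
    HasSum (fun k : ℕ => (k !⁻¹ : ℝ) • B ^ k) (exp B) := by
  -- any normed-algebra structure will do: `exp` and `HasSum` only see the product topology
  let : NormedRing (Matrix n n ℝ) := Matrix.linftyOpNormedRing
  let : NormedAlgebra ℝ (Matrix n n ℝ) := Matrix.linftyOpNormedAlgebra
  exact exp_series_hasSum_exp' B

lemma exp_mulVec_of_mulVec_eq_zero {B : Matrix n n ℝ} {v : n → ℝ} (hv : B *ᵥ v = 0) :
    exp B *ᵥ v = v := by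
  have hterm : ∀ k : ℕ, ((k !⁻¹ : ℝ) • B ^ k) *ᵥ v = if k = 0 then v else 0 := by
    rintro (_ | k)
    · simp
    · rw [smul_mulVec, pow_succ, ← mulVec_mulVec, hv, mulVec_zero, smul_zero,
        if_neg k.succ_ne_zero]
  have hsum := (hasSum_exp B).map (mulVec.addMonoidHomLeft v)
    (continuous_id.matrix_mulVec continuous_const)
  simp only [Function.comp_def, mulVec.addMonoidHomLeft, AddMonoidHom.coe_mk, ZeroHom.coe_mk,
    hterm] at hsum
  exact hsum.unique (hasSum_ite_eq 0 v)

lemma one_add_le_exp_apply {B : Matrix n n ℝ} (hB : ∀ i j, 0 ≤ B i j) (i j : n) :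
    (1 + B) i j ≤ exp B i j := by
  have hsum := Pi.hasSum.1 (Pi.hasSum.1 (hasSum_exp B) i) j
  have := sum_le_hasSum (Finset.range 2)
    (fun k _ => mul_nonneg (by positivity) (pow_apply_nonneg hB k i j)) hsum
  simpa [Finset.sum_range_succ] using this

lemma exp_add_smul_one (B : Matrix n n ℝ) (s : ℝ) :
    exp (B + s • 1) = Real.exp s • exp B := by
  rw [exp_add_of_commute _ _ ((Commute.one_right B).smul_right s), smul_one_eq_diagonal,
    exp_diagonal, Pi.exp_def, ← Real.exp_eq_exp_ℝ, ← smul_one_eq_diagonal, mul_smul_one]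

lemma exists_pos_le_exp_apply {B : Matrix n n ℝ} (hB : ∀ i j, i ≠ j → 0 ≤ B i j) :
    ∃ c > 0, (∀ i, c ≤ exp B i i) ∧ ∀ i j, i ≠ j → c * B i j ≤ exp B i j := by
  set s := ∑ k, |B k k|
  have hshift : ∀ i j, 0 ≤ (B + s • 1) i j := by
    intro i j
    rcases eq_or_ne i j with rfl | hij
    · have : |B i i| ≤ s :=
        Finset.single_le_sum (f := fun k => |B k k|) (fun k _ => abs_nonneg _) (Finset.mem_univ i)
      simp only [add_apply, smul_apply, one_apply_eq, smul_eq_mul, mul_one]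
      linarith [neg_abs_le (B i i)]
    · simpa [one_apply_ne hij] using hB i j hij
  have hexp : exp B = Real.exp (-s) • exp (B + s • 1) := by
    rw [← exp_add_smul_one, add_assoc, ← add_smul, add_neg_cancel, zero_smul, add_zero]
  refine ⟨Real.exp (-s), Real.exp_pos _, fun i => ?_, fun i j hij => ?_⟩
  · have h1 : 1 ≤ (1 + (B + s • 1)) i i := by simpa using hshift i i
    rw [hexp, smul_apply, smul_eq_mul]
    exact le_mul_of_one_le_right (Real.exp_pos _).le (h1.trans (one_add_le_exp_apply hshift i i))
  · have h1 : B i j = (1 + (B + s • 1)) i j := by simp [one_apply_ne hij]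
    rw [hexp, smul_apply, smul_eq_mul, h1]
    exact mul_le_mul_of_nonneg_left (one_add_le_exp_apply hshift i j) (Real.exp_pos _).le

lemma exp_mem_rowStochastic {B : Matrix n n ℝ} (hB : ∀ i j, i ≠ j → 0 ≤ B i j)
    (hrow : B *ᵥ 1 = 0) : exp B ∈ rowStochastic ℝ n := by
  obtain ⟨c, hc, hdiag, hoff⟩ := exists_pos_le_exp_apply hB
  refine ⟨fun i j => ?_, exp_mulVec_of_mulVec_eq_zero hrow⟩
  rcases eq_or_ne i j with rfl | hij
  · exact hc.le.trans (hdiag i)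
  · exact (mul_nonneg hc.le (hB i j hij)).trans (hoff i j hij)

end Exponential

section RowStochastic

variable {M : Matrix n n ℝ}

lemma mulVec_apply_le_of_forall_le (hM : M ∈ rowStochastic ℝ n) {x : n → ℝ} {b : ℝ}
    (hx : ∀ j, x j ≤ b) {ε : ℝ} {i r : n} (hε : ε ≤ M i r) :
    (M *ᵥ x) i ≤ ε * x r + (1 - ε) * b := by
  have hgap : b - (M *ᵥ x) i = ∑ j, M i j * (b - x j) := by
    simp only [mul_sub, Finset.sum_sub_distrib, ← Finset.sum_mul,
      sum_row_of_mem_rowStochastic hM i, one_mul, mulVec, dotProduct]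
  have hr : M i r * (b - x r) ≤ ∑ j, M i j * (b - x j) :=
    Finset.single_le_sum (fun j _ => mul_nonneg (hM.1 i j) (sub_nonneg.2 (hx j)))
      (Finset.mem_univ r)
  nlinarith [mul_le_mul_of_nonneg_right hε (sub_nonneg.2 (hx r))]

lemma le_mulVec_apply_of_forall_le (hM : M ∈ rowStochastic ℝ n) {x : n → ℝ} {a : ℝ}
    (hx : ∀ j, a ≤ x j) {ε : ℝ} {i r : n} (hε : ε ≤ M i r) :
    ε * x r + (1 - ε) * a ≤ (M *ᵥ x) i := by
  have := mulVec_apply_le_of_forall_le hM (x := -x) (fun j => neg_le_neg (hx j)) hε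
  simp only [mulVec_neg, Pi.neg_apply] at this
  linarith

variable [Nonempty n]

lemma iSup_mulVec_le (hM : M ∈ rowStochastic ℝ n) (x : n → ℝ) :
    ⨆ i, (M *ᵥ x) i ≤ ⨆ i, x i :=
  ciSup_le fun i => by
    simpa using mulVec_apply_le_of_forall_le hM (le_ciSup (Finite.bddAbove_range x)) (hM.1 i i)

lemma iInf_le_iInf_mulVec (hM : M ∈ rowStochastic ℝ n) (x : n → ℝ) :
    ⨅ i, x i ≤ ⨅ i, (M *ᵥ x) i :=
  le_ciInf fun i => by
    simpa using le_mulVec_apply_of_forall_le hM (ciInf_le (Finite.bddBelow_range x)) (hM.1 i i)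

lemma iSup_sub_iInf_mulVec_le (hM : M ∈ rowStochastic ℝ n) {ε : ℝ} {r : n}
    (hε : ∀ i, ε ≤ M i r) (x : n → ℝ) :
    (⨆ i, (M *ᵥ x) i) - ⨅ i, (M *ᵥ x) i ≤ (1 - ε) * ((⨆ i, x i) - ⨅ i, x i) := by
  have hsup : ⨆ i, (M *ᵥ x) i ≤ ε * x r + (1 - ε) * ⨆ i, x i :=
    ciSup_le fun i => mulVec_apply_le_of_forall_le hM (le_ciSup (Finite.bddAbove_range x)) (hε i)
  have hinf : ε * x r + (1 - ε) * ⨅ i, x i ≤ ⨅ i, (M *ᵥ x) i :=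
    le_ciInf fun i => le_mulVec_apply_of_forall_le hM (ciInf_le (Finite.bddBelow_range x)) (hε i)
  linarith

theorem exists_tendsto_pow_mulVec_of_pos_col (hM : M ∈ rowStochastic ℝ n) {K : ℕ}
    (hK : K ≠ 0) {r : n} (hr : ∀ i, 0 < (M ^ K) i r) (v : n → ℝ) :
    ∃ c : ℝ, Tendsto (fun k => M ^ k *ᵥ v) atTop (𝓝 fun _ => c) := by
  set x : ℕ → n → ℝ := fun k => M ^ k *ᵥ v
  have hstep : ∀ k, x (k + 1) = M *ᵥ x k := fun k => by simp [x, pow_succ', mulVec_mulVec]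
  have hstepK : ∀ k, x (k + K) = M ^ K *ᵥ x k := fun k => by
    simp [x, pow_add, (Commute.pow_pow_self M k K).eq, mulVec_mulVec]
  set ε := ⨅ i, (M ^ K) i r
  have hε : ∀ i, ε ≤ (M ^ K) i r := ciInf_le (Finite.bddBelow_range _)
  have hε0 : 0 < ε := by
    obtain ⟨i, hi⟩ := exists_eq_ciInf_of_finite (f := fun i => (M ^ K) i r)
    simpa only [ε, ← hi] using hr i
  have hε1 : ε ≤ 1 := (hε r).trans (le_one_of_mem_rowStochastic (pow_mem hM K))
  have hsup : Antitone fun k => ⨆ i, x k i :=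
    antitone_nat_of_succ_le fun k => hstep k ▸ iSup_mulVec_le hM (x k)
  have hinf : Monotone fun k => ⨅ i, x k i :=
    monotone_nat_of_le_succ fun k => hstep k ▸ iInf_le_iInf_mulVec hM (x k)
  refine exists_tendsto_const_of_squeeze hsup hinf ?_
    (fun k => le_ciSup (Finite.bddAbove_range _)) (fun k => ciInf_le (Finite.bddBelow_range _))
  refine tendsto_zero_of_antitone_of_le_mul (fun k l hkl => sub_le_sub (hsup hkl) (hinf hkl))
    (fun k => sub_nonneg.2 ((ciInf_le (Finite.bddBelow_range _) r).trans
      (le_ciSup (Finite.bddAbove_range _) r))) (sub_nonneg.2 hε1) (by linarith) hK fun k => ?_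
  simpa only [Pi.sub_apply, hstepK] using iSup_sub_iInf_mulVec_le (pow_mem hM K) hε (x k)

theorem exists_tendsto_pow_of_pos_col (hM : M ∈ rowStochastic ℝ n) {K : ℕ} (hK : K ≠ 0)
    {r : n} (hr : ∀ i, 0 < (M ^ K) i r) :
    ∃ c : n → ℝ, Tendsto (fun k => M ^ k) atTop (𝓝 (of fun _ j => c j)) := by
  choose c hc using fun j =>
    exists_tendsto_pow_mulVec_of_pos_col hM hK hr (Pi.single j 1)
  refine ⟨c, tendsto_pi_nhds.2 fun i => tendsto_pi_nhds.2 fun j => ?_⟩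
  simpa [Function.comp_def, mulVec_single_one] using ((continuous_apply i).tendsto _).comp (hc j)

end RowStochastic

lemma eventually_pow_apply_pos {R : Type*} [Semiring R] [PartialOrder R] [IsStrictOrderedRing R]
    {M : Matrix n n R} (hM : ∀ i j, 0 ≤ M i j)
    (hdiag : ∀ i, 0 < M i i) {r i : n} (h : Relation.ReflTransGen (fun j i => 0 < M i j) r i) :
    ∀ᶠ k in atTop, 0 < (M ^ k) i r := by
  induction h with
  | refl =>
    refine Eventually.of_forall fun k => ?_
    induction k with
    | zero => simp
    | succ k ih => rw [pow_succ']; exact mul_apply_pos hM (pow_apply_nonneg hM k) (hdiag r) ih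
  | tail _ hedge ih =>
    filter_upwards [(tendsto_sub_atTop_nat 1).eventually ih, eventually_ge_atTop 1] with k hk hk1
    rw [← Nat.sub_add_cancel hk1, pow_succ']
    exact mul_apply_pos hM (pow_apply_nonneg hM _) hedge hk

end Matrix

/-- Let `L` be an `N × N` Laplacian matrix and `Pe` a row stochastic matrix with
strictly positive diagonal entries, and suppose the directed graph with an edge from `j` to `i`
whenever `i ≠ j` and (`Pe i j > 0` or `L i j < 0`) contains a directed spanning tree.  Then for
every `t > 0` the matrix `Pe * exp (-t L)` is SIA: its powers converge to `1_N cᵀ`. -/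
theorem mul_expNegLaplacian_isSIA (N : ℕ) (L Pe : Matrix (Fin N) (Fin N) ℝ)
    (hLoff : ∀ i j : Fin N, i ≠ j → L i j ≤ 0)
    (hLrow : ∀ i : Fin N, ∑ j, L i j = 0)
    (hPnn : ∀ i j : Fin N, 0 ≤ Pe i j)
    (hProw : ∀ i : Fin N, ∑ j, Pe i j = 1)
    (hPdiag : ∀ i : Fin N, 0 < Pe i i)
    (htree : ∃ r : Fin N, ∀ i : Fin N,
      Relation.ReflTransGen (fun j i : Fin N => i ≠ j ∧ (0 < Pe i j ∨ L i j < 0)) r i)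
    (t : ℝ) (ht : 0 < t) :
    ∃ c : Fin N → ℝ,
      Tendsto (fun k : ℕ => (Pe * NormedSpace.exp (-(t • L))) ^ k) atTop
        (𝓝 (Matrix.of fun _ j : Fin N => c j)) := by
  obtain ⟨r, hr⟩ := htree
  have : Nonempty (Fin N) := ⟨r⟩
  have hoff : ∀ i j, i ≠ j → 0 ≤ (-(t • L)) i j := fun i j hij => by
    simpa using mul_nonpos_of_nonneg_of_nonpos ht.le (hLoff i j hij)
  have hE : exp (-(t • L)) ∈ rowStochastic ℝ (Fin N) :=
    exp_mem_rowStochastic hoff (by ext i; simp [mulVec, dotProduct, ← Finset.mul_sum, hLrow])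
  obtain ⟨c, hc, hEdiag, hEoff⟩ := exists_pos_le_exp_apply hoff
  have hP : Pe ∈ rowStochastic ℝ (Fin N) := mem_rowStochastic_iff_sum.2 ⟨hPnn, hProw⟩
  have hMdiag : ∀ i, 0 < (Pe * exp (-(t • L))) i i := fun i =>
    mul_apply_pos hPnn hE.1 (hPdiag i) (hc.trans_le (hEdiag i))
  have hMedge : ∀ j i, i ≠ j ∧ (0 < Pe i j ∨ L i j < 0) →
      0 < (Pe * exp (-(t • L))) i j := by
    rintro j i ⟨hij, hPe | hL⟩
    · exact mul_apply_pos hPnn hE.1 hPe (hc.trans_le (hEdiag j))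
    · refine mul_apply_pos hPnn hE.1 (hPdiag i) ((mul_pos hc ?_).trans_le (hEoff i j hij))
      simpa using mul_neg_of_pos_of_neg ht hL
  have hM := mul_mem hP hE
  obtain ⟨K, hK, hcol⟩ := ((eventually_ne_atTop 0).and (eventually_all.2 fun i =>
    eventually_pow_apply_pos hM.1 hMdiag (Relation.ReflTransGen.mono hMedge _ _ (hr i)))).exists
  exact exists_tendsto_pow_of_pos_col hM hK hcol
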